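/- arXiv:2604.00724 — 2 statements merged into one kernel-verified Lean document; each statement's English description precedes it below -/
import Mathlib

section
/- In any finite multigraph, there exists a 2-coloring of the edges with colors red and blue such that for every vertex v, the number of red edges incident to v and the number of blue edges incident to v differ by at most 2. -/
set_option linter.unusedSectionVars false
set_option maxHeartbeats 800000

section DS
variable {V E : Type} [Fintype E] [DecidableEq V] (ends : E → V × V)

def gfun (c : E → Bool) (e : E) (v : V) : ℤ :=
  if (ends e).1 = v ∨ (ends e).2 = v then (if c e then 1 else -1) else 0

def fdisc (c : E → Bool) (S : Finset E) (v : V) : ℤ :=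
  ((S.filter fun e => c e = true ∧ ((ends e).1 = v ∨ (ends e).2 = v)).card : ℤ)
  - ((S.filter fun e => c e = false ∧ ((ends e).1 = v ∨ (ends e).2 = v)).card : ℤ)

def dg (S : Finset E) (v : V) : ℕ :=
  (S.filter fun e => (ends e).1 = v ∨ (ends e).2 = v).card

lemma fdisc_eq_sum (c : E → Bool) (S : Finset E) (v : V) :
    fdisc ends c S v = ∑ e ∈ S, gfun ends c e v := by
  unfold fdisc gfun
  rw [Finset.card_filter, Finset.card_filter]
  push_cast
  rw [← Finset.sum_sub_distrib]
  apply Finset.sum_congr rfl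
  intro e _
  by_cases h1 : c e <;> by_cases h2 : (ends e).1 = v ∨ (ends e).2 = v <;>
    simp [h1, h2]

def IsPath (S : Finset E) (n : ℕ) (vs : ℕ → V) (es : ℕ → E) : Prop :=
  (∀ i < n, es i ∈ S) ∧
  (∀ i ≤ n, ∀ j ≤ n, vs i = vs j → i = j) ∧
  (∀ i < n, ends (es i) = (vs i, vs (i+1)) ∨ ends (es i) = (vs (i+1), vs i))

def IsCycle (S : Finset E) (k : ℕ) (ws : ℕ → V) (cs : ℕ → E) : Prop :=
  2 ≤ k ∧
  (∀ i < k, cs i ∈ S) ∧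
  (∀ i < k, ∀ j < k, ws i = ws j → i = j) ∧
  (∀ i < k, ∀ j < k, cs i = cs j → i = j) ∧
  (∀ i < k, ends (cs i) = (ws i, ws ((i+1) % k)) ∨ ends (cs i) = (ws ((i+1) % k), ws i))

lemma path_edge_inj {S : Finset E} {n : ℕ} {vs : ℕ → V} {es : ℕ → E}
    (hp : IsPath ends S n vs es) :
    ∀ a < n, ∀ b < n, es a = es b → a = b := by
  obtain ⟨-, hinj, hlink⟩ := hp
  intro a ha b hb hab
  have h1 := hlink a ha
  have h2 := hlink b hb
  rw [hab] at h1
  rcases h1 with h1 | h1 <;> rcases h2 with h2 | h2 <;>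
    rw [h1, Prod.mk.injEq] at h2 <;>
    obtain ⟨e1, e2⟩ := h2
  · exact hinj a (by omega) b (by omega) e1
  · have t1 := hinj a (by omega) (b+1) (by omega) e1
    have t2 := hinj (a+1) (by omega) b (by omega) e2
    omega
  · have t1 := hinj (a+1) (by omega) b (by omega) e1
    have t2 := hinj a (by omega) (b+1) (by omega) e2
    omega
  · exact hinj a (by omega) b (by omega) e2

lemma grow (hloop : ∀ e, (ends e).1 ≠ (ends e).2) (S : Finset E)
    (hdeg : ∀ e ∈ S, 2 ≤ dg ends S (ends e).1 ∧ 2 ≤ dg ends S (ends e).2)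
    (n : ℕ) (hn : 1 ≤ n) (vs : ℕ → V) (es : ℕ → E) (hp : IsPath ends S n vs es) :
    (∃ k ws cs, IsCycle ends S k ws cs) ∨ (∃ vs' es', IsPath ends S (n+1) vs' es') := by
  classical
  obtain ⟨hes, hinj, hlink⟩ := hp
  have hlast : es (n-1) ∈ S := hes _ (by omega)
  have hl := hlink (n-1) (by omega)
  rw [show n - 1 + 1 = n from by omega] at hl
  have htouch : (ends (es (n-1))).1 = vs n ∨ (ends (es (n-1))).2 = vs n := by
    rcases hl with h | h
    · right; rw [h]
    · left; rw [h]
  have hd2 : 2 ≤ dg ends S (vs n) := by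
    rcases htouch with h | h
    · have := (hdeg _ hlast).1; rwa [h] at this
    · have := (hdeg _ hlast).2; rwa [h] at this
  set F := S.filter fun e => (ends e).1 = vs n ∨ (ends e).2 = vs n with hF
  have hlastF : es (n-1) ∈ F := Finset.mem_filter.mpr ⟨hlast, htouch⟩
  have : (F.erase (es (n-1))).Nonempty := by
    rw [← Finset.card_pos, Finset.card_erase_of_mem hlastF]
    have : 2 ≤ F.card := hd2
    omega
  obtain ⟨e', he'⟩ := this
  rw [Finset.mem_erase, hF, Finset.mem_filter] at he'
  obtain ⟨hne, he'S, ht'⟩ := he'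
  obtain ⟨w, hw⟩ : ∃ w, ends e' = (vs n, w) ∨ ends e' = (w, vs n) := by
    rcases ht' with h | h
    · exact ⟨(ends e').2, Or.inl (by rw [← h])⟩
    · exact ⟨(ends e').1, Or.inr (by rw [← h])⟩
  have hwn : w ≠ vs n := by
    have := hloop e'
    rcases hw with h | h <;> rw [h] at this <;> simp at this ⊢ <;> tauto
  -- no edge of the path equals e'
  have hnot : ∀ m, m < n → es m ≠ e' := by
    intro m hm heq
    have h1 := hlink m hm
    rw [heq] at h1
    have hmn : m = n - 1 := by
      rcases h1 with h1 | h1 <;> rcases hw with h2 | h2 <;>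
        rw [h1, Prod.mk.injEq] at h2 <;> obtain ⟨e1, e2⟩ := h2
      · have := hinj _ (by omega) _ (by omega) e1; omega
      · have := hinj _ (by omega) _ (by omega) e2; omega
      · have := hinj _ (by omega) _ (by omega) e1; omega
      · have := hinj _ (by omega) _ (by omega) e2; omega
    rw [hmn] at heq
    exact hne heq.symm
  by_cases hfresh : ∃ j ≤ n, vs j = w
  · -- cycle
    left
    obtain ⟨j, hj, hjw⟩ := hfresh
    have hjn : j < n := by
      rcases Nat.lt_or_ge j n with h | h
      · exact h
      · exfalso; apply hwn; rw [← hjw]; congr 1; omega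
    refine ⟨n - j + 1, fun i => vs (j + i), fun i => if i = n - j then e' else es (j + i),
      by omega, ?_, ?_, ?_, ?_⟩
    · intro i hi
      beta_reduce
      by_cases h : i = n - j
      · rw [if_pos h]; exact he'S
      · rw [if_neg h]; exact hes _ (by omega)
    · intro a ha b hb hab
      beta_reduce at hab
      have := hinj (j+a) (by omega) (j+b) (by omega) hab
      omega
    · intro a ha b hb hab
      beta_reduce at hab
      by_cases h1 : a = n - j <;> by_cases h2 : b = n - j <;>
        simp only [if_pos, if_neg, h1, h2, if_true] at hab
      · omega
      · exact absurd hab.symm (hnot _ (by omega))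
      · exact absurd hab (hnot _ (by omega))
      · have := path_edge_inj ends ⟨hes, hinj, hlink⟩ (j+a) (by omega) (j+b) (by omega) hab
        omega
    · intro i hi
      beta_reduce
      by_cases h : i = n - j
      · have h1 : (i + 1) % (n - j + 1) = 0 := by
          rw [h]; simp
        rw [h1, if_pos h, h]
        rw [show j + (n - j) = n from by omega]
        simpa [hjw] using hw
      · have h1 : (i + 1) % (n - j + 1) = i + 1 := Nat.mod_eq_of_lt (by omega)
        rw [h1, if_neg h, show j + (i+1) = (j + i) + 1 from by omega]
        exact hlink (j+i) (by omega)
  · -- extend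
    right
    push_neg at hfresh
    refine ⟨Function.update vs (n+1) w, Function.update es n e', ?_, ?_, ?_⟩
    · intro i hi
      by_cases h : i = n
      · rw [h, Function.update_self]; exact he'S
      · rw [Function.update_of_ne h]; exact hes _ (by omega)
    · intro a ha b hb hab
      by_cases h1 : a = n + 1 <;> by_cases h2 : b = n + 1
      · omega
      · rw [h1, Function.update_self, Function.update_of_ne h2] at hab
        exact absurd hab.symm (hfresh b (by omega))
      · rw [h2, Function.update_self, Function.update_of_ne h1] at hab
        exact absurd hab (hfresh a (by omega))
      · rw [Function.update_of_ne h1, Function.update_of_ne h2] at hab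
        exact hinj _ (by omega) _ (by omega) hab
    · intro i hi
      by_cases h : i = n
      · rw [h, Function.update_self, Function.update_of_ne (by omega : n ≠ n + 1),
          Function.update_self]
        exact hw
      · rw [Function.update_of_ne h, Function.update_of_ne (by omega : i ≠ n + 1),
          Function.update_of_ne (by omega : i + 1 ≠ n + 1)]
        exact hlink _ (by omega)

end DS

section DS2
variable {V E : Type} [Fintype E] [DecidableEq V] (ends : E → V × V)

def TS (S : Finset E) : Finset V :=
  S.image (fun e => (ends e).1) ∪ S.image (fun e => (ends e).2)

lemma path_card {S : Finset E} {n : ℕ} {vs : ℕ → V} {es : ℕ → E}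
    (hn : 1 ≤ n) (hp : IsPath ends S n vs es) : n + 1 ≤ (TS ends S).card := by
  classical
  obtain ⟨hes, hinj, hlink⟩ := hp
  have hmem : ∀ i ≤ n, vs i ∈ TS ends S := by
    intro i hi
    unfold TS
    rw [Finset.mem_union]
    rcases Nat.lt_or_ge i n with h | h
    · rcases hlink i h with hl | hl
      · left
        exact Finset.mem_image.mpr ⟨es i, hes _ h, by rw [hl]⟩
      · right
        exact Finset.mem_image.mpr ⟨es i, hes _ h, by rw [hl]⟩
    · have hin : i = n := by omega
      have hl := hlink (n-1) (by omega)
      rw [show n - 1 + 1 = n from by omega] at hl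
      rcases hl with hl | hl
      · right
        exact Finset.mem_image.mpr ⟨es (n-1), hes _ (by omega), by rw [hl, hin]⟩
      · left
        exact Finset.mem_image.mpr ⟨es (n-1), hes _ (by omega), by rw [hl, hin]⟩
  calc n + 1 = ((Finset.range (n+1)).image vs).card := by
        rw [Finset.card_image_of_injOn, Finset.card_range]
        intro a ha b hb hab
        rw [Finset.mem_coe, Finset.mem_range] at ha hb
        exact hinj a (by omega) b (by omega) hab
    _ ≤ (TS ends S).card := by
        apply Finset.card_le_card
        intro v hv
        obtain ⟨i, hi, rfl⟩ := Finset.mem_image.mp hv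
        exact hmem i (Nat.lt_succ_iff.mp (Finset.mem_range.mp hi))

lemma to_cycle (hloop : ∀ e, (ends e).1 ≠ (ends e).2) (S : Finset E)
    (hdeg : ∀ e ∈ S, 2 ≤ dg ends S (ends e).1 ∧ 2 ≤ dg ends S (ends e).2) :
    ∀ m n (vs : ℕ → V) (es : ℕ → E), 1 ≤ n → IsPath ends S n vs es →
      (TS ends S).card ≤ n + m → ∃ k ws cs, IsCycle ends S k ws cs := by
  intro m
  induction m with
  | zero =>
    intro n vs es hn hp hcard
    have := path_card ends hn hp
    omega
  | succ m ih =>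
    intro n vs es hn hp hcard
    rcases grow ends hloop S hdeg n hn vs es hp with cyc | ⟨vs', es', hp'⟩
    · exact cyc
    · exact ih (n+1) vs' es' (by omega) hp' (by omega)

lemma exists_cycle (hloop : ∀ e, (ends e).1 ≠ (ends e).2) (S : Finset E)
    (hS : S.Nonempty)
    (hdeg : ∀ e ∈ S, 2 ≤ dg ends S (ends e).1 ∧ 2 ≤ dg ends S (ends e).2) :
    ∃ k ws cs, IsCycle ends S k ws cs := by
  classical
  obtain ⟨e0, he0⟩ := hS
  apply to_cycle ends hloop S hdeg ((TS ends S).card) 1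
    (fun i => if i = 0 then (ends e0).1 else (ends e0).2) (fun _ => e0) le_rfl
  · refine ⟨fun i _ => he0, ?_, ?_⟩
    · intro a ha b hb hab
      by_cases ha0 : a = 0 <;> by_cases hb0 : b = 0
      · omega
      · exfalso
        apply hloop e0
        have hb1 : b = 1 := by omega
        rw [ha0, hb1] at hab
        simpa using hab
      · exfalso
        apply hloop e0
        have ha1 : a = 1 := by omega
        rw [ha1, hb0] at hab
        simpa using hab.symm
      · omega
    · intro i hi
      have : i = 0 := by omega
      subst this
      left
      simp
  · omega

end DS2

section DS3
variable {V E : Type} [Fintype E] [DecidableEq V] (ends : E → V × V)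

lemma extend_one [DecidableEq E] (S : Finset E) (e : E) (he : e ∈ S) (u w : V)
    (hends : ends e = (u, w) ∨ ends e = (w, u)) (huw : u ≠ w)
    (hdeg : dg ends S u = 1) (c : E → Bool)
    (hc : ∀ v, |fdisc ends c (S.erase e) v| ≤ 2) :
    ∃ c', ∀ v, |fdisc ends c' S v| ≤ 2 := by
  classical
  set S' := S.erase e with hS'
  set x : Bool := if fdisc ends c S' w < 0 then true else false with hx
  set c' : E → Bool := fun y => if y = e then x else c y with hc'def
  have hnotmem : e ∉ S' := Finset.notMem_erase e S
  have hins : insert e S' = S := Finset.insert_erase he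
  have hsum : ∀ v, fdisc ends c' S v = gfun ends c' e v + fdisc ends c S' v := by
    intro v
    rw [fdisc_eq_sum, ← hins, Finset.sum_insert hnotmem, fdisc_eq_sum]
    congr 1
    apply Finset.sum_congr rfl
    intro y hy
    have hyne : y ≠ e := ne_of_mem_of_not_mem hy hnotmem
    simp only [gfun, hc'def, if_neg hyne]
  have hzero : fdisc ends c S' u = 0 := by
    have hno : ∀ y ∈ S', ¬((ends y).1 = u ∨ (ends y).2 = u) := by
      intro y hy ht
      have hyS : y ∈ S := Finset.mem_of_mem_erase hy
      have hyne : y ≠ e := Finset.ne_of_mem_erase hy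
      have hsub : {y, e} ⊆ S.filter (fun e' => (ends e').1 = u ∨ (ends e').2 = u) := by
        intro z hz
        rcases Finset.mem_insert.mp hz with rfl | hz
        · exact Finset.mem_filter.mpr ⟨hyS, ht⟩
        · rw [Finset.mem_singleton] at hz
          subst hz
          refine Finset.mem_filter.mpr ⟨he, ?_⟩
          rcases hends with h | h <;> rw [h]
          · left; rfl
          · right; rfl
      have h2 := Finset.card_le_card hsub
      rw [Finset.card_pair hyne] at h2
      unfold dg at hdeg
      omega
    unfold fdisc
    rw [Finset.filter_eq_empty_iff.mpr (fun y hy h => hno y hy h.2),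
      Finset.filter_eq_empty_iff.mpr (fun y hy h => hno y hy h.2)]
    simp
  refine ⟨c', fun v => ?_⟩
  rw [hsum v]
  have hce : c' e = x := by simp [hc'def]
  by_cases hv : (ends e).1 = v ∨ (ends e).2 = v
  · have hv' : u = v ∨ w = v := by
      rcases hends with h | h <;> rw [h] at hv <;> tauto
    simp only [gfun, if_pos hv, hce]
    rcases hv' with h | h
    · rw [← h, hzero]
      split_ifs <;> norm_num
    · rw [← h]
      have hf := hc w
      rw [abs_le] at hf ⊢
      by_cases hneg : fdisc ends c S' w < 0
      · have hxv : x = true := by rw [hx, if_pos hneg]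
        rw [hxv]
        simp only [if_true]
        omega
      · have hxv : x = false := by rw [hx, if_neg hneg]
        rw [hxv]
        simp only [Bool.false_eq_true, if_false]
        omega
  · simp only [gfun, if_neg hv, zero_add]
    exact hc v
end DS3

section DS4
variable {V E : Type} [Fintype E] [DecidableEq V] (ends : E → V × V)

lemma main_lemma (hloop : ∀ e, (ends e).1 ≠ (ends e).2) (S : Finset E) :
    ∃ c : E → Bool, ∀ v, |fdisc ends c S v| ≤ 2 := by
  classical
  induction S using Finset.strongInductionOn with
  | _ S ih =>
  rcases Finset.eq_empty_or_nonempty S with rfl | hS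
  · exact ⟨fun _ => true, fun v => by simp [fdisc]⟩
  by_cases hA : ∃ e ∈ S, dg ends S (ends e).1 = 1 ∨ dg ends S (ends e).2 = 1
  · obtain ⟨e, he, hd⟩ := hA
    obtain ⟨c, hc⟩ := ih (S.erase e) (Finset.erase_ssubset he)
    rcases hd with hd | hd
    · exact extend_one ends S e he (ends e).1 (ends e).2
        (Or.inl (by simp)) (hloop e) hd c hc
    · exact extend_one ends S e he (ends e).2 (ends e).1
        (Or.inr (by simp)) (Ne.symm (hloop e)) hd c hc
  · push_neg at hA
    have hdeg : ∀ e ∈ S, 2 ≤ dg ends S (ends e).1 ∧ 2 ≤ dg ends S (ends e).2 := by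
      intro e he
      have h1 := (hA e he).1
      have h2 := (hA e he).2
      have hm1 : 0 < dg ends S (ends e).1 :=
        Finset.card_pos.mpr ⟨e, Finset.mem_filter.mpr ⟨he, Or.inl rfl⟩⟩
      have hm2 : 0 < dg ends S (ends e).2 :=
        Finset.card_pos.mpr ⟨e, Finset.mem_filter.mpr ⟨he, Or.inr rfl⟩⟩
      omega
    obtain ⟨k, ws, cs, hk2, hcsS, hwsinj, hcsinj, hlink⟩ :=
      exists_cycle ends hloop S hS hdeg
    set C := (Finset.range k).image cs with hC
    have hCS : C ⊆ S := by
      intro y hy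
      obtain ⟨i, hi, rfl⟩ := Finset.mem_image.mp hy
      exact hcsS i (Finset.mem_range.mp hi)
    have hCne : C.Nonempty :=
      ⟨cs 0, Finset.mem_image.mpr ⟨0, Finset.mem_range.mpr (by omega), rfl⟩⟩
    obtain ⟨c, hc⟩ := ih (S \ C) (Finset.sdiff_ssubset hCS hCne)
    set f0 := fdisc ends c (S \ C) (ws 0) with hf0
    set flip : Bool := if f0 < 0 then true else false with hflip
    set c' : E → Bool := fun y =>
      if h : ∃ i, i < k ∧ cs i = y then (decide ((Nat.find h) % 2 = 1)).xor flip
      else c y with hc'def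
    set σ : ℕ → ℤ := fun i =>
      if (decide (i % 2 = 1)).xor flip = true then 1 else -1 with hσ
    have hc'on : ∀ i, i < k → c' (cs i) = (decide (i % 2 = 1)).xor flip := by
      intro i hi
      have hex : ∃ j, j < k ∧ cs j = cs i := ⟨i, hi, rfl⟩
      rw [hc'def]
      beta_reduce
      rw [dif_pos hex]
      have hspec := Nat.find_spec hex
      have hfind : Nat.find hex = i := hcsinj _ hspec.1 _ hi hspec.2
      rw [hfind]
    have hc'off : ∀ y ∈ S \ C, c' y = c y := by
      intro y hy
      rw [hc'def]
      beta_reduce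
      rw [dif_neg]
      rintro ⟨i, hi, rfl⟩
      rw [Finset.mem_sdiff] at hy
      exact hy.2 (Finset.mem_image.mpr ⟨i, Finset.mem_range.mpr hi, rfl⟩)
    have hcsinjOn : ∀ a ∈ Finset.range k, ∀ b ∈ Finset.range k, cs a = cs b → a = b := by
      intro a ha b hb
      exact hcsinj a (Finset.mem_range.mp ha) b (Finset.mem_range.mp hb)
    have hsplit : ∀ v, fdisc ends c' S v =
        fdisc ends c (S \ C) v + ∑ i ∈ Finset.range k, gfun ends c' (cs i) v := by
      intro v
      rw [fdisc_eq_sum, ← Finset.sum_sdiff hCS]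
      congr 1
      · rw [fdisc_eq_sum]
        apply Finset.sum_congr rfl
        intro y hy
        simp only [gfun, hc'off y hy]
      · rw [hC, Finset.sum_image hcsinjOn]
    have hterm : ∀ v, ∀ i, i < k →
        gfun ends c' (cs i) v = if (ws i = v ∨ ws ((i+1) % k) = v) then σ i else 0 := by
      intro v i hi
      simp only [gfun]
      have hcnd : ((ends (cs i)).1 = v ∨ (ends (cs i)).2 = v) ↔
          (ws i = v ∨ ws ((i+1) % k) = v) := by
        rcases hlink i hi with h | h <;> rw [h] <;> simp <;> tauto
      rw [if_congr hcnd rfl rfl, hc'on i hi]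
    have hσval : ∀ a b : ℕ, a % 2 ≠ b % 2 → σ a + σ b = 0 := by
      intro a b h
      rcases Nat.mod_two_eq_zero_or_one a with ha | ha <;>
        rcases Nat.mod_two_eq_zero_or_one b with hb | hb <;>
        rw [ha, hb] at h <;> try omega
      all_goals
        simp only [hσ]
        beta_reduce
        rw [ha, hb]
        cases flip <;> simp
    refine ⟨c', fun v => ?_⟩
    rw [hsplit v]
    by_cases hvc : ∃ j, j < k ∧ ws j = v
    · obtain ⟨j, hj, hwj⟩ := hvc
      set j' := (j + k - 1) % k with hj'
      have hj'lt : j' < k := Nat.mod_lt _ (by omega)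
      have hj'val : j' = if j = 0 then k - 1 else j - 1 := by
        rw [hj']
        by_cases h0 : j = 0
        · rw [if_pos h0, h0, Nat.zero_add]
          exact Nat.mod_eq_of_lt (by omega)
        · rw [if_neg h0, show j + k - 1 = (j - 1) + k from by omega,
            Nat.add_mod_right]
          exact Nat.mod_eq_of_lt (by omega)
      have hne : j' ≠ j := by rw [hj'val]; split_ifs with h0 <;> omega
      have hiff : ∀ i, i < k → ((i+1) % k = j ↔ i = j') := by
        intro i hi
        rw [hj'val]
        constructor
        · intro h
          by_cases hik : i + 1 = k
          · rw [hik, Nat.mod_self] at h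
            split_ifs with h0 <;> omega
          · rw [Nat.mod_eq_of_lt (by omega)] at h
            split_ifs with h0 <;> omega
        · intro h
          split_ifs at h with h0
          · rw [h, show k - 1 + 1 = k from by omega, Nat.mod_self]
            omega
          · rw [h, show j - 1 + 1 = j from by omega]
            exact Nat.mod_eq_of_lt (by omega)
      have hterm2 : ∀ i ∈ Finset.range k,
          gfun ends c' (cs i) v = (if i = j then σ j else 0) + (if i = j' then σ j' else 0) := by
        intro i hir
        have hi := Finset.mem_range.mp hir
        rw [hterm v i hi]
        have h1 : ws i = v ↔ i = j := by
          constructor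
          · intro h; exact hwsinj i hi j hj (h.trans hwj.symm)
          · intro h; rw [h, hwj]
        have h2 : ws ((i+1) % k) = v ↔ i = j' := by
          rw [← hiff i hi]
          constructor
          · intro h; exact hwsinj _ (Nat.mod_lt _ (by omega)) j hj (h.trans hwj.symm)
          · intro h; rw [h, hwj]
        by_cases e1 : i = j
        · rw [if_pos (Or.inl (h1.mpr e1)), if_pos e1,
            if_neg (fun hh : i = j' => hne (hh.symm.trans e1)), add_zero, e1]
        · by_cases e2 : i = j'
          · rw [if_pos (Or.inr (h2.mpr e2)), if_neg e1, if_pos e2, zero_add, e2]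
          · rw [if_neg ?_, if_neg e1, if_neg e2, add_zero]
            rintro (h | h)
            · exact e1 (h1.mp h)
            · exact e2 (h2.mp h)
      rw [Finset.sum_congr rfl hterm2, Finset.sum_add_distrib,
        Finset.sum_ite_eq' (Finset.range k) j (fun _ => σ j),
        Finset.sum_ite_eq' (Finset.range k) j' (fun _ => σ j'),
        if_pos (Finset.mem_range.mpr hj), if_pos (Finset.mem_range.mpr hj'lt)]
      by_cases hodd : j = 0 ∧ k % 2 = 1
      · obtain ⟨hj0, hk1⟩ := hodd
        have hjv : j' = k - 1 := by rw [hj'val, if_pos hj0]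
        have hws0 : ws 0 = v := by rw [← hj0]; exact hwj
        have hval : σ j + σ j' = if flip = true then 2 else -2 := by
          rw [hj0, hjv]
          have h2 : (k-1) % 2 = 0 := by omega
          simp only [hσ]
          beta_reduce
          rw [h2]
          cases flip <;> norm_num
        rw [hval]
        have hfb : |f0| ≤ 2 := by rw [hf0]; exact hc (ws 0)
        have hfv : fdisc ends c (S \ C) v = f0 := by rw [hf0, hws0]
        rw [hfv]
        rw [abs_le] at hfb ⊢
        by_cases hneg : f0 < 0
        · have hfl : flip = true := by rw [hflip, if_pos hneg]
          rw [hfl, if_pos rfl]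
          omega
        · have hfl : flip = false := by rw [hflip, if_neg hneg]
          rw [hfl]
          norm_num
          omega
      · have hpar : j % 2 ≠ j' % 2 := by
          rw [hj'val]
          split_ifs with h0
          · have hk0 : k % 2 = 0 := by
              rcases Nat.mod_two_eq_zero_or_one k with h | h
              · exact h
              · exact absurd ⟨h0, h⟩ hodd
            omega
          · omega
        rw [hσval j j' hpar, add_zero]
        exact hc v
    · have hz : ∀ i ∈ Finset.range k, gfun ends c' (cs i) v = 0 := by
        intro i hir
        have hi := Finset.mem_range.mp hir
        rw [hterm v i hi, if_neg]
        rintro (h | h)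
        · exact hvc ⟨i, hi, h⟩
        · exact hvc ⟨(i+1) % k, Nat.mod_lt _ (by omega), h⟩
      rw [Finset.sum_congr rfl hz, Finset.sum_const_zero, add_zero]
      exact hc v
end DS4

/-- In any finite loopless multigraph there is a red/blue edge coloring
(`c e = true` meaning red) such that at every vertex the numbers of incident red
and blue edges differ by at most 2. -/
theorem stmt_1 {V E : Type} [Fintype E] [DecidableEq V] (ends : E → V × V)
    (hloopless : ∀ e, (ends e).1 ≠ (ends e).2) :
    ∃ c : E → Bool, ∀ v : V,
      |((Finset.univ.filter fun e =>
            c e = true ∧ ((ends e).1 = v ∨ (ends e).2 = v)).card : ℤ)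
        - ((Finset.univ.filter fun e =>
            c e = false ∧ ((ends e).1 = v ∨ (ends e).2 = v)).card : ℤ)| ≤ 2 := by
  obtain ⟨c, hc⟩ := main_lemma ends hloopless Finset.univ
  exact ⟨c, fun v => hc v⟩
end

section
/- Let C be a cycle and P a path, vertex-disjoint, in a multigraph, and let v₁ ∈ C and v₂ an internal vertex of P be distinguished. Then there is an exchange of two edges (deleting one edge of C incident to v₁ and one edge of P incident to v₂, and adding two new edges between the components) that produces a single path of length |C| + |P| on the union of the vertex sets, preserving all vertex degrees. -/
/-- The edge multiset of a (multigraph) cycle of length `m` through the vertices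
`f 0, f 1, …, f (m-1)` in order. -/
def cycleEdgeMultiset {V : Type} (m : ℕ) (f : Fin m → V) : Multiset (Sym2 V) :=
  ↑((List.finRange m).map fun i => s(f i, f ⟨((i : ℕ) + 1) % m, Nat.mod_lt _ i.pos⟩))

/-- The edge multiset of a path of length `p` (in edges) through the vertices
`f 0, f 1, …, f p` in order. -/
def pathEdgeMultiset {V : Type} (p : ℕ) (f : Fin (p + 1) → V) : Multiset (Sym2 V) :=
  ↑((List.finRange p).map fun i => s(f i.castSucc, f i.succ))

/-- Degree of a vertex in a multigraph given by a multiset of edges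
(a loop counts twice). -/
def multisetDeg {V : Type} [DecidableEq V] (E : Multiset (Sym2 V)) (v : V) : ℕ :=
  (E.map fun e => (if v ∈ e then 1 else 0) + (if e = s(v, v) then 1 else 0)).sum

/-! Read the cycle as the closed walk `f (i₀ + 1), …, f i₀, f (i₀ + 1)` and cut the path
between `g j₀` and `g (j₀ + 1)`. Inserting the open walk `f (i₀ + 1), …, f i₀` into the gap
gives a path through all the vertices, whose edges are those of the cycle and of the path with
`f i₀ f (i₀ + 1)` and `g j₀ g (j₀ + 1)` replaced by `g j₀ f (i₀ + 1)` and `f i₀ g (j₀ + 1)`.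
This two-switch keeps the multiset of endpoints, hence every degree. Walks are handled as
vertex lists, so that cutting and splicing them is list concatenation. -/

variable {V : Type}

def walkEdges : List V → Multiset (Sym2 V)
  | x :: y :: l => s(x, y) ::ₘ walkEdges (y :: l)
  | _ => 0

@[simp] lemma walkEdges_singleton (x : V) : walkEdges [x] = 0 := rfl

@[simp] lemma walkEdges_cons_cons (x y : V) (l : List V) :
    walkEdges (x :: y :: l) = s(x, y) ::ₘ walkEdges (y :: l) := rfl

lemma walkEdges_append_cons (l₁ l₂ : List V) (x : V) :
    walkEdges (l₁ ++ x :: l₂) = walkEdges (l₁ ++ [x]) + walkEdges (x :: l₂) := by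
  induction l₁ with
  | nil => simp
  | cons z l₁ ih =>
    rcases l₁ with _ | ⟨w, l₁⟩
    · simp
    · simp only [List.cons_append, walkEdges_cons_cons] at ih ⊢
      rw [ih, Multiset.cons_add]

lemma walkEdges_append_cons_cons (l₁ l₂ : List V) (x y : V) :
    walkEdges (l₁ ++ x :: y :: l₂)
      = walkEdges (l₁ ++ [x]) + s(x, y) ::ₘ walkEdges (y :: l₂) := by
  rw [walkEdges_append_cons, walkEdges_cons_cons]

lemma mk_mem_walkEdges (l₁ l₂ : List V) (x y : V) :
    s(x, y) ∈ walkEdges (l₁ ++ x :: y :: l₂) := by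
  rw [walkEdges_append_cons_cons]
  exact Multiset.mem_add.2 (Or.inr (Multiset.mem_cons_self _ _))

lemma walkEdges_splice {T D R R₁ R₂ : List V} {x y u v : V} (hu : R = u :: R₁)
    (hv : R = R₂ ++ [v]) :
    walkEdges (T ++ x :: (R ++ y :: D)) + {s(v, u), s(x, y)}
      = walkEdges (R ++ [u]) + walkEdges (T ++ x :: y :: D) + {s(v, y), s(x, u)} := by
  have hRD : walkEdges (R ++ y :: D) = walkEdges R + s(v, y) ::ₘ walkEdges (y :: D) := by
    rw [hv, List.append_assoc, List.singleton_append, walkEdges_append_cons_cons]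
  have hRu : walkEdges (R ++ [u]) = walkEdges R + {s(v, u)} := by
    rw [hv, List.append_assoc, List.singleton_append, walkEdges_append_cons_cons]
    rfl
  have hM : walkEdges (T ++ x :: (R ++ y :: D))
      = walkEdges (T ++ [x]) + s(x, u) ::ₘ walkEdges (R ++ y :: D) := by
    rw [hu, List.cons_append, walkEdges_append_cons_cons]
  rw [hM, hRD, hRu, walkEdges_append_cons_cons]
  simp only [Multiset.insert_eq_cons, ← Multiset.singleton_add]
  abel

lemma List.exists_ofFn_eq_append_cons_cons {α : Type*} {m : ℕ} (g : Fin m → α) (i j : Fin m)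
    (hij : (j : ℕ) = i + 1) : ∃ l₁ l₂, List.ofFn g = l₁ ++ g i :: g j :: l₂ := by
  have hi : (i : ℕ) + 1 < (List.ofFn g).length := by simp [← hij]
  refine ⟨(List.ofFn g).take i, (List.ofFn g).drop (i + 2), ?_⟩
  have hgi : g i = (List.ofFn g)[(i : ℕ)] := by simp
  have hgj : g j = (List.ofFn g)[(i : ℕ) + 1] := by simp [← hij]
  rw [hgi, hgj, List.getElem_cons_drop, List.getElem_cons_drop, List.take_append_drop]

lemma List.exists_ofFn_eq {α : Type*} {l : List α} {n : ℕ} (hl : l.length = n) :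
    ∃ f : Fin n → α, List.ofFn f = l := by
  subst hl
  exact ⟨_, List.ofFn_getElem⟩

lemma List.ofFn_add_one_add_eq (n : ℕ) (f : Fin (n + 1) → V) (i : Fin (n + 1)) :
    ∃ R₁ R₂, List.ofFn (fun k => f (i + 1 + k)) = f (i + 1) :: R₁ ∧
      List.ofFn (fun k => f (i + 1 + k)) = R₂ ++ [f i] := by
  refine ⟨List.ofFn fun k : Fin n => f (i + 1 + k.succ),
    List.ofFn fun k : Fin n => f (i + 1 + k.castSucc), ?_, ?_⟩
  · rw [List.ofFn_succ, add_zero]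
  · rw [List.ofFn_succ', List.concat_eq_append, add_assoc, add_comm 1 (Fin.last n),
      Fin.last_add_one, add_zero]

lemma injective_of_perm_ofFn_append {k m n : ℕ} {h : Fin k → V} {f : Fin m → V}
    {g : Fin n → V} (hp : (List.ofFn h).Perm (List.ofFn f ++ List.ofFn g))
    (hf : Function.Injective f) (hg : Function.Injective g) (hdisj : ∀ i j, f i ≠ g j) : Function.Injective h := by
  rw [← List.nodup_ofFn, hp.nodup_iff, List.nodup_append]
  refine ⟨List.nodup_ofFn.2 hf, List.nodup_ofFn.2 hg, ?_⟩
  simp only [List.mem_ofFn]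
  rintro _ ⟨i, rfl⟩ _ ⟨j, rfl⟩
  exact hdisj i j

lemma range_eq_union_of_perm_ofFn_append {k m n : ℕ} {h : Fin k → V} {f : Fin m → V}
    {g : Fin n → V} (hp : (List.ofFn h).Perm (List.ofFn f ++ List.ofFn g)) :
    Set.range h = Set.range f ∪ Set.range g := by
  ext w
  simp only [Set.mem_union, Set.mem_range, ← List.mem_ofFn, hp.mem_iff, List.mem_append]

lemma pathEdgeMultiset_eq_walkEdges (p : ℕ) (h : Fin (p + 1) → V) :
    pathEdgeMultiset p h = walkEdges (List.ofFn h) := by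
  induction p with
  | zero => rfl
  | succ p ih =>
    calc pathEdgeMultiset (p + 1) h
        = s(h 0, h 1) ::ₘ pathEdgeMultiset p (fun i => h i.succ) := by
          simp only [pathEdgeMultiset, List.finRange_succ, List.map_cons, List.map_map]
          rfl
      _ = walkEdges (List.ofFn h) := by
          rw [ih, List.ofFn_succ (f := h), List.ofFn_succ (f := fun i => h i.succ)]
          rfl

lemma cycleEdgeMultiset_eq_map_univ (n : ℕ) (f : Fin (n + 1) → V) :
    cycleEdgeMultiset (n + 1) f = Finset.univ.val.map fun i => s(f i, f (i + 1)) := by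
  rw [Fin.univ_val_map, List.ofFn_eq_map, cycleEdgeMultiset]
  refine congrArg _ (List.map_congr_left fun i _ => ?_)
  congr 2
  ext
  simp [Fin.val_add]

lemma cycleEdgeMultiset_comp_add_left (n : ℕ) (f : Fin (n + 1) → V) (c : Fin (n + 1)) :
    cycleEdgeMultiset (n + 1) (fun k => f (c + k)) = cycleEdgeMultiset (n + 1) f := by
  rw [cycleEdgeMultiset_eq_map_univ, cycleEdgeMultiset_eq_map_univ]
  conv_rhs => rw [← Multiset.map_univ_val_equiv (Equiv.addLeft c), Multiset.map_map]
  simp only [Function.comp_def, Equiv.coe_addLeft, add_assoc]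

lemma cycleEdgeMultiset_eq_walkEdges (n : ℕ) (f : Fin (n + 1) → V) :
    cycleEdgeMultiset (n + 1) f = walkEdges (List.ofFn f ++ [f 0]) := by
  have hmod (k : ℕ) : k % (n + 1) < n + 1 := Nat.mod_lt _ n.succ_pos
  calc cycleEdgeMultiset (n + 1) f
      = pathEdgeMultiset (n + 1) (fun k => f ⟨k % (n + 1), hmod k⟩) := by
        refine congrArg _ (List.map_congr_left fun i _ => ?_)
        simp [Nat.mod_eq_of_lt i.isLt]
    _ = walkEdges (List.ofFn f ++ [f 0]) := by
        rw [pathEdgeMultiset_eq_walkEdges, List.ofFn_succ', List.concat_eq_append]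
        congr 3
        · exact funext fun i => congrArg f (Fin.ext (Nat.mod_eq_of_lt i.isLt))
        · exact congrArg f (Fin.ext (Nat.mod_self _))

lemma cycleEdgeMultiset_eq_walkEdges_rotate (n : ℕ) (f : Fin (n + 1) → V) (c : Fin (n + 1)) :
    cycleEdgeMultiset (n + 1) f = walkEdges (List.ofFn (fun k => f (c + k)) ++ [f c]) := by
  rw [← cycleEdgeMultiset_comp_add_left n f c, cycleEdgeMultiset_eq_walkEdges, add_zero]

lemma multisetDeg_add [DecidableEq V] (A B : Multiset (Sym2 V)) (w : V) :
    multisetDeg (A + B) w = multisetDeg A w + multisetDeg B w := by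
  simp [multisetDeg]

lemma multisetDeg_singleton_mk [DecidableEq V] (a b w : V) :
    multisetDeg {s(a, b)} w = (if w = a then 1 else 0) + (if w = b then 1 else 0) := by
  simp only [multisetDeg, Multiset.map_singleton, Multiset.sum_singleton, Sym2.mem_iff, Sym2.eq_iff]
  split_ifs <;> grind

lemma multisetDeg_eq_of_add_twoSwitch [DecidableEq V] {A B : Multiset (Sym2 V)} {a b c d : V}
    (h : A + {s(a, b), s(c, d)} = B + {s(a, d), s(c, b)}) (w : V) :
    multisetDeg A w = multisetDeg B w := by
  have := congrArg (multisetDeg · w) h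
  simp only [multisetDeg_add, Multiset.insert_eq_cons, ← Multiset.singleton_add,
    multisetDeg_singleton_mk] at this
  omega

lemma Multiset.eq_tsub_add_of_add_pair_eq {α : Type*} [DecidableEq α] {M C P E : Multiset α}
    {e₁ e₂ : α} (h : M + {e₁, e₂} = C + P + E) (h₁ : e₁ ∈ C) (h₂ : e₂ ∈ P) :
    M = C + P - {e₁, e₂} + E := by
  have hle : {e₁, e₂} ≤ C + P := by
    rw [Multiset.insert_eq_cons, ← Multiset.singleton_add]
    exact add_le_add (Multiset.singleton_le.2 h₁) (Multiset.singleton_le.2 h₂)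
  rw [tsub_add_eq_add_tsub hle, ← h, add_tsub_cancel_right]

theorem stmt_10_general {V : Type} [DecidableEq V] (a p : ℕ)
    (f : Fin a → V) (g : Fin (p + 1) → V)
    (hf : Function.Injective f) (hg : Function.Injective g)
    (hdisj : ∀ i j, f i ≠ g j)
    (i₀ : Fin a) (j₀ : Fin (p + 1)) (hj₁ : (j₀ : ℕ) < p) :
    ∃ (e₁ e₂ e₃ e₄ : Sym2 V) (h : Fin (a + p + 1) → V),
      e₁ ∈ cycleEdgeMultiset a f ∧ f i₀ ∈ e₁ ∧
      e₂ ∈ pathEdgeMultiset p g ∧ g j₀ ∈ e₂ ∧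
      Function.Injective h ∧
      Set.range h = Set.range f ∪ Set.range g ∧
      pathEdgeMultiset (a + p) h
        = (cycleEdgeMultiset a f + pathEdgeMultiset p g - {e₁, e₂}) + {e₃, e₄} ∧
      ∀ v, multisetDeg (pathEdgeMultiset (a + p) h) v
        = multisetDeg (cycleEdgeMultiset a f + pathEdgeMultiset p g) v := by
  obtain ⟨n, rfl⟩ := Nat.exists_eq_add_one_of_ne_zero i₀.pos.ne'
  set j₁ : Fin (p + 1) := ⟨j₀ + 1, by omega⟩
  set F : Fin (n + 1) → V := fun k => f (i₀ + 1 + k)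
  obtain ⟨R₁, R₂, hFcons, hFconcat⟩ := List.ofFn_add_one_add_eq n f i₀
  obtain ⟨T, D, hG⟩ := List.exists_ofFn_eq_append_cons_cons g j₀ j₁ rfl
  obtain ⟨h, hh⟩ := List.exists_ofFn_eq (l := T ++ g j₀ :: (List.ofFn F ++ g j₁ :: D))
    (n := n + 1 + p + 1) <| by
      have := congrArg List.length hG
      simp only [List.length_append, List.length_cons, List.length_ofFn] at this ⊢
      omega
  have hperm : (List.ofFn h).Perm (List.ofFn F ++ List.ofFn g) := by
    simpa only [hh, hG, List.append_assoc, List.singleton_append] using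
      List.perm_append_comm_assoc (T ++ [g j₀]) (List.ofFn F) (g j₁ :: D)
  have hC := cycleEdgeMultiset_eq_walkEdges_rotate n f (i₀ + 1)
  have hP : pathEdgeMultiset p g = walkEdges (T ++ g j₀ :: g j₁ :: D) := by
    rw [pathEdgeMultiset_eq_walkEdges, hG]
  have he₁ : s(f i₀, f (i₀ + 1)) ∈ cycleEdgeMultiset (n + 1) f := by
    rw [hC, hFconcat, List.append_assoc, List.singleton_append]
    exact mk_mem_walkEdges _ [] _ _
  have he₂ : s(g j₀, g j₁) ∈ pathEdgeMultiset p g := hP ▸ mk_mem_walkEdges _ _ _ _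
  have hexchange := walkEdges_splice (T := T) (D := D) (x := g j₀) (y := g j₁) hFcons hFconcat
  rw [← hC, ← hP, ← hh, ← pathEdgeMultiset_eq_walkEdges] at hexchange
  refine ⟨_, _, _, _, h, he₁, Sym2.mem_mk_left _ _, he₂, Sym2.mem_mk_left _ _,
    injective_of_perm_ofFn_append hperm (hf.comp (add_right_injective _)) hg fun _ _ => hdisj _ _,
    ?_, Multiset.eq_tsub_add_of_add_pair_eq hexchange he₁ he₂,
    multisetDeg_eq_of_add_twoSwitch hexchange⟩
  rw [range_eq_union_of_perm_ofFn_append hperm, ← (add_left_surjective (i₀ + 1)).range_comp f]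
  rfl

/-- Merging a cycle with a disjoint path: given a vertex-disjoint cycle `C` of
length `a ≥ 2` with distinguished vertex `f i₀` and a path `P` of length `p`
with a distinguished internal vertex `g j₀`, there is an exchange of two edges
(deleting one edge of `C` incident to `f i₀` and one edge of `P` incident to `g j₀`,
and adding two new edges) producing a single path of length `a + p` on the union of
the two vertex sets, preserving the degree of every vertex. -/
theorem stmt_10 {V : Type} [DecidableEq V] (a p : ℕ) (ha : 2 ≤ a)
    (f : Fin a → V) (g : Fin (p + 1) → V)
    (hf : Function.Injective f) (hg : Function.Injective g)
    (hdisj : ∀ i j, f i ≠ g j)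
    (i₀ : Fin a) (j₀ : Fin (p + 1)) (hj₀ : 0 < (j₀ : ℕ)) (hj₁ : (j₀ : ℕ) < p) :
    ∃ (e₁ e₂ e₃ e₄ : Sym2 V) (h : Fin (a + p + 1) → V),
      e₁ ∈ cycleEdgeMultiset a f ∧ f i₀ ∈ e₁ ∧
      e₂ ∈ pathEdgeMultiset p g ∧ g j₀ ∈ e₂ ∧
      Function.Injective h ∧
      Set.range h = Set.range f ∪ Set.range g ∧
      pathEdgeMultiset (a + p) h
        = (cycleEdgeMultiset a f + pathEdgeMultiset p g - {e₁, e₂}) + {e₃, e₄} ∧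
      ∀ v, multisetDeg (pathEdgeMultiset (a + p) h) v
        = multisetDeg (cycleEdgeMultiset a f + pathEdgeMultiset p g) v :=
  stmt_10_general a p f g hf hg hdisj i₀ j₀ hj₁
end
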